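/- arXiv:2111.08549 — 2 statements merged into one kernel-verified Lean document; each statement's English description precedes it below -/
import Mathlib

section
/- Let (A, B, C) be a recollement of abelian categories and X a resolving subcategory of B. Set X'' := add j*(X). If j_*(X'') ⊆ X and j_* is exact, then X'' is a resolving subcategory of C. -/
open CategoryTheory CategoryTheory.Limits

attribute [local instance] Abelian.hasFiniteBiproducts

universe v₁ v₂ v₃ u₁ u₂ u₃

/-- A recollement of abelian categories. -/
structure Recollement (A : Type u₁) (B : Type u₂) (C : Type u₃)
    [Category.{v₁} A] [Category.{v₂} B] [Category.{v₃} C]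
    [Abelian A] [Abelian B] [Abelian C] where
  /-- the functor `i^*` -/
  iStar : B ⥤ A
  /-- the functor `i_*` -/
  iLower : A ⥤ B
  /-- the functor `i^!` -/
  iShriek : B ⥤ A
  /-- the functor `j_!` -/
  jLower : C ⥤ B
  /-- the functor `j^*` -/
  jStar : B ⥤ C
  /-- the functor `j_*` -/
  jUpper : C ⥤ B
  adj₁ : iStar ⊣ iLower
  adj₂ : iLower ⊣ iShriek
  adj₃ : jLower ⊣ jStar
  adj₄ : jStar ⊣ jUpper
  iLower_preservesFiniteLimits : PreservesFiniteLimits iLower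
  iLower_preservesFiniteColimits : PreservesFiniteColimits iLower
  jStar_preservesFiniteLimits : PreservesFiniteLimits jStar
  jStar_preservesFiniteColimits : PreservesFiniteColimits jStar
  iStar_preservesFiniteColimits : PreservesFiniteColimits iStar
  iShriek_preservesFiniteLimits : PreservesFiniteLimits iShriek
  jLower_preservesFiniteColimits : PreservesFiniteColimits jLower
  jUpper_preservesFiniteLimits : PreservesFiniteLimits jUpper
  iLower_full : iLower.Full
  iLower_faithful : iLower.Faithful
  jLower_full : jLower.Full
  jLower_faithful : jLower.Faithful
  jUpper_full : jUpper.Full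
  jUpper_faithful : jUpper.Faithful
  im_eq_ker : ∀ b : B, IsZero (jStar.obj b) ↔ ∃ a : A, Nonempty (iLower.obj a ≅ b)

variable {A : Type u₁} [Category.{v₁} A] [Abelian A]

/-- A resolving subcategory: contains the projectives, closed under extensions
and under kernels of epimorphisms (given by short exact sequences). -/
structure IsResolving (X : Set A) : Prop where
  projective_mem : ∀ P : A, Projective P → P ∈ X
  ext_closed : ∀ S : ShortComplex A, S.ShortExact → S.X₁ ∈ X → S.X₃ ∈ X → S.X₂ ∈ X
  ker_epi_closed : ∀ S : ShortComplex A, S.ShortExact → S.X₂ ∈ X → S.X₃ ∈ X → S.X₁ ∈ X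

/-- `ResLE X M n` : there is an exact sequence `0 → X_n → ⋯ → X_0 → M → 0`
with all `X_i ∈ X`. -/
inductive ResLE (X : Set A) : A → ℕ → Prop
  | zero {M X₀ : A} (e : X₀ ≅ M) (hX₀ : X₀ ∈ X) : ResLE X M 0
  | succ {M K X₀ : A} {n : ℕ} (f : K ⟶ X₀) (g : X₀ ⟶ M) (w : f ≫ g = 0)
      (hse : (ShortComplex.mk f g w).ShortExact) (hX₀ : X₀ ∈ X)
      (hK : ResLE X K n) : ResLE X M (n + 1)

/-- The `X`-resolution dimension of an object `M` (`⊤` if there is no finite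
`X`-resolution). -/
noncomputable def resDim (X : Set A) (M : A) : ℕ∞ :=
  sInf {n : ℕ∞ | ∃ m : ℕ, ResLE X M m ∧ n = (m : ℕ∞)}

/-- The `X`-resolution dimension of the whole category. -/
noncomputable def resDimCat (X : Set A) : ℕ∞ :=
  ⨆ M : A, resDim X M

/-- The closure of a class of objects under finite direct sums and direct summands. -/
def addClosure (D : Set A) : Set A :=
  {a | ∃ (n : ℕ) (f : Fin n → A), (∀ i, f i ∈ D) ∧
    ∃ (s : a ⟶ ⨁ f) (r : ⨁ f ⟶ a), s ≫ r = 𝟙 a}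


lemma mem_addClosure_of_retract {D : Set A} {a d : A} (hd : d ∈ D)
    (s : a ⟶ d) (r : d ⟶ a) (hsr : s ≫ r = 𝟙 a) : a ∈ addClosure D := by
  refine ⟨1, fun _ => d, fun _ => hd, s ≫ biproduct.ι (fun _ : Fin 1 => d) 0, biproduct.π (fun _ : Fin 1 => d) 0 ≫ r, ?_⟩
  rw [Category.assoc, biproduct.ι_π_self_assoc, hsr]

/-- If `X` is resolving in `B`, `X'' := add j*(X)` satisfies `j_*(X'') ⊆ X` and `j_*`
is exact, then `X''` is resolving in `C`. -/
theorem jStar_image_isResolving_of_jUpper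
    (A : Type u₁) (B : Type u₂) (C : Type u₃)
    [Category.{v₁} A] [Category.{v₂} B] [Category.{v₃} C]
    [Abelian A] [Abelian B] [Abelian C] [EnoughProjectives B]
    (R : Recollement A B C)
    (X : Set B) (hX : IsResolving X)
    (X'' : Set C) (hX''def : X'' = addClosure (R.jStar.obj '' X))
    (h : ∀ c ∈ X'', R.jUpper.obj c ∈ X)
    (hju : PreservesFiniteColimits R.jUpper) :
    IsResolving X'' := by
  subst hX''def
  have := R.jUpper_full
  have := R.jUpper_faithful
  have := R.jUpper_preservesFiniteLimits
  have := R.jStar_preservesFiniteColimits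
  have := R.adj₄.isRightAdjoint
  have key : ∀ c : C, R.jUpper.obj c ∈ X →
      c ∈ addClosure (R.jStar.obj '' X) := by
    intro c hc
    exact mem_addClosure_of_retract ⟨_, hc, rfl⟩ (inv (R.adj₄.counit.app c))
      (R.adj₄.counit.app c) (by simp)
  constructor
  · intro P hP
    set Q := Projective.over (R.jUpper.obj P) with hQ
    have hπ : Epi (R.jStar.map (Projective.π (R.jUpper.obj P))) :=
      preserves_epi_of_preservesColimit R.jStar _
    set g : R.jStar.obj Q ⟶ P :=
      R.jStar.map (Projective.π (R.jUpper.obj P)) ≫ R.adj₄.counit.app P with hg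
    have hepi : Epi g := epi_comp _ _
    exact mem_addClosure_of_retract ⟨Q, hX.projective_mem Q inferInstance, rfl⟩
      (Projective.factorThru (𝟙 P) g) g (Projective.factorThru_comp _ _)
  · intro S hS h1 h3
    have hse := hS.map_of_exact R.jUpper
    exact key _ (hX.ext_closed _ hse (h _ h1) (h _ h3))
  · intro S hS h2 h3
    have hse := hS.map_of_exact R.jUpper
    exact key _ (hX.ker_epi_closed _ hse (h _ h2) (h _ h3))
end

section
/- Let (A, B, C) be a recollement of abelian categories with enough projectives and let X_B, X_C be resolving subcategories of B and C. Then X_C-res C ≤ X_B-res B + X_C-res j*(X_B), where X_C-res j*(X_B) = sup{X_C-res j*(X) : X ∈ X_B}. In particular, if j*(X_B) ⊆ X_C then X_C-res C ≤ X_B-res B. -/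
open CategoryTheory CategoryTheory.Limits

attribute [local instance] Abelian.hasFiniteBiproducts

universe v₁ v₂ v₃ u₁ u₂ u₃

variable {A : Type u₁} [Category.{v₁} A] [Abelian A]

/-!
For `M` in `C` the unit `M ⟶ j^* j_! M` is an isomorphism and `j^*` is exact, so `j^*` carries an
`X_B`-resolution of `j_! M` of length `n` to a resolution of `M` of length `n` by objects `j^* X`,
`X ∈ X_B`, each of `X_C`-resolution dimension at most `k`. Such a resolution splices into an
`X_C`-resolution of length `n + k`: for a resolving subcategory of a category with enough
projectives, the objects of resolution dimension `≤ n` are closed under extensions, and the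
cokernel of a monomorphism from dimension `≤ n` to dimension `≤ n + 1` has dimension
`≤ n + 1`. Both facts come from one induction on `n`, whose step is the horseshoe construction:
the kernels of an epimorphism of short exact sequences form a short exact sequence (snake lemma).
-/

namespace CategoryTheory.ShortComplex

variable {C : Type*} [Category C] [Abelian C]

lemma shortExact_kernel_ι {X Y : C} (g : X ⟶ Y) [Epi g] :
    (ShortComplex.mk (kernel.ι g) g (kernel.condition g)).ShortExact where
  exact := exact_of_f_is_kernel _ (kernelIsKernel g)

noncomputable def ShortExact.isoKernel {S : ShortComplex C} (hS : S.ShortExact) :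
    S.X₁ ≅ kernel S.g :=
  IsLimit.conePointUniqueUpToIso hS.fIsKernel (limit.isLimit _)

lemma SnakeInput.shortExact_L₀ (S : SnakeInput C) [Mono S.L₁.f] (h : IsZero S.L₃.X₁) :
    S.L₀.ShortExact where
  exact := S.L₀_exact
  epi_g := S.L₁'_exact.epi_f (h.eq_of_tgt _ _)

noncomputable def snakeInputOfHom {S₁ S₂ : ShortComplex C} (φ : S₁ ⟶ S₂)
    (h₁ : S₁.Exact) [Epi S₁.g] (h₂ : S₂.Exact) [Mono S₂.f] : SnakeInput C where
  L₀ := kernel φ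
  L₁ := S₁
  L₂ := S₂
  L₃ := cokernel φ
  v₀₁ := kernel.ι φ
  v₁₂ := φ
  v₂₃ := cokernel.π φ
  h₀ := kernelIsKernel φ
  h₃ := cokernelIsCokernel φ
  L₁_exact := h₁
  epi_L₁_g := inferInstance
  L₂_exact := h₂
  mono_L₂_f := inferInstance

lemma shortExact_kernel_of_epi_τ₁ {S₁ S₂ : ShortComplex C} (φ : S₁ ⟶ S₂)
    (h₁ : S₁.ShortExact) (h₂ : S₂.ShortExact) [Epi φ.τ₁] : (kernel φ).ShortExact := by
  have := h₁.epi_g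
  have := h₂.mono_f
  have : Mono (snakeInputOfHom φ h₁.exact h₂.exact).L₁.f := h₁.mono_f
  exact (snakeInputOfHom φ h₁.exact h₂.exact).shortExact_L₀
    ((isZero_cokernel_of_epi φ.τ₁).of_iso (PreservesCokernel.iso π₁ φ))

lemma shortExact_kernel_comp {X Y Z : C} (f : X ⟶ Y) (g : Y ⟶ Z) [Epi f] :
    (ShortComplex.mk (kernel.map f (f ≫ g) (𝟙 _) g (by simp))
      (kernel.map (f ≫ g) g f (𝟙 _) (by simp)) (by cat_disch)).ShortExact :=
  have : Mono (kernelCokernelCompSequence.snakeInput f g).L₁.f :=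
    inferInstanceAs (Mono (biprod.inl : X ⟶ X ⊞ Y))
  (kernelCokernelCompSequence.snakeInput f g).shortExact_L₀ (isZero_cokernel_of_epi f)

end CategoryTheory.ShortComplex

open ShortComplex

variable {X : Set A}

namespace IsResolving

lemma mem_of_isZero (hX : IsResolving X) {M : A} (hM : IsZero M) : M ∈ X :=
  hX.projective_mem M hM.projective

lemma mem_of_iso (hX : IsResolving X) {M N : A} (hM : M ∈ X) (e : M ≅ N) : N ∈ X :=
  hX.ext_closed _ (shortExact_kernel_ι e.inv) (hX.mem_of_isZero (isZero_kernel_of_mono _)) hM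

lemma biprod_mem (hX : IsResolving X) {M N : A} (hM : M ∈ X) (hN : N ∈ X) : (M ⊞ N) ∈ X :=
  hX.ext_closed _ (Splitting.ofHasBinaryBiproduct M N).shortExact hM hN

lemma kernel_mem (hX : IsResolving X) {X₀ M : A} (g : X₀ ⟶ M) [Epi g] (h₀ : X₀ ∈ X)
    (hM : M ∈ X) : kernel g ∈ X :=
  hX.ker_epi_closed _ (shortExact_kernel_ι g) h₀ hM

end IsResolving

namespace ResLE

lemma of_iso {M N : A} {n : ℕ} (h : ResLE X M n) (e : M ≅ N) : ResLE X N n := by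
  cases h with
  | zero e' h₀ => exact zero (e'.trans e) h₀
  | succ f g w hse h₀ hK =>
    exact succ f (g ≫ e.hom) (by simp [reassoc_of% w])
      (shortExact_of_iso (ShortComplex.isoMk (S₁ := .mk f g w) (Iso.refl _) (Iso.refl _) e
        (by simp) (by simp)) hse) h₀ hK

lemma of_mem {M : A} (hM : M ∈ X) : ResLE X M 0 := zero (Iso.refl M) hM

lemma zero_iff (hX : IsResolving X) {M : A} : ResLE X M 0 ↔ M ∈ X :=
  ⟨fun | zero e h₀ => hX.mem_of_iso h₀ e, of_mem⟩

lemma of_epi {X₀ M : A} {n : ℕ} (g : X₀ ⟶ M) [Epi g] (h₀ : X₀ ∈ X)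
    (hK : ResLE X (kernel g) n) : ResLE X M (n + 1) :=
  succ _ g _ (shortExact_kernel_ι g) h₀ hK

lemma exists_epi {M : A} {n : ℕ} (h : ResLE X M (n + 1)) :
    ∃ (X₀ : A) (g : X₀ ⟶ M), Epi g ∧ X₀ ∈ X ∧ ResLE X (kernel g) n := by
  cases h with
  | succ f g w hse h₀ hK => exact ⟨_, g, hse.epi_g, h₀, hK.of_iso hse.isoKernel⟩

lemma to_succ (hX : IsResolving X) {M : A} {n : ℕ} (h : ResLE X M n) :
    ResLE X M (n + 1) := by
  induction h with
  | zero e h₀ => exact of_epi e.hom h₀ (of_mem (hX.mem_of_isZero (isZero_kernel_of_mono _)))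
  | succ f g w hse h₀ _ ih => exact succ f g w hse h₀ ih

lemma mono (hX : IsResolving X) {M : A} {m n : ℕ} (h : ResLE X M m) (hmn : m ≤ n) :
    ResLE X M n := by
  induction hmn with
  | refl => exact h
  | step _ ih => exact ih.to_succ hX

end ResLE

lemma resDim_le_of_resLE {M : A} {n : ℕ} (h : ResLE X M n) : resDim X M ≤ n :=
  sInf_le ⟨n, h, rfl⟩

lemma resDim_le_coe_iff {M : A} {n : ℕ} : resDim X M ≤ n ↔ ∃ m ≤ n, ResLE X M m := by
  refine ⟨fun h => ?_, fun ⟨m, hmn, hm⟩ =>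
    (resDim_le_of_resLE hm).trans (by exact_mod_cast hmn)⟩
  obtain ⟨_, ⟨m, hm, rfl⟩, hlt⟩ :=
    sInf_lt_iff.mp (h.trans_lt (Nat.cast_lt.mpr n.lt_succ_self))
  exact ⟨m, Nat.lt_succ_iff.mp (by exact_mod_cast hlt), hm⟩

lemma ResLE.kernel_comp {n : ℕ} (hext : ObjectProperty.IsClosedUnderExtensions (ResLE X · n))
    {Y Z W : A} (q : Y ⟶ Z) [Epi q] (g : Z ⟶ W) (hq : ResLE X (kernel q) n)
    (hg : ResLE X (kernel g) n) : ResLE X (kernel (q ≫ g)) n :=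
  hext.prop_X₂_of_shortExact (shortExact_kernel_comp q g) hq hg

lemma resLE_X₃_of_shortExact {n : ℕ}
    (hext : ObjectProperty.IsClosedUnderExtensions (ResLE X · n)) {S : ShortComplex A}
    (hS : S.ShortExact) (h₁ : ResLE X S.X₁ n) (h₂ : ResLE X S.X₂ (n + 1)) :
    ResLE X S.X₃ (n + 1) := by
  have := hS.epi_g
  obtain ⟨X₀, b, _, h₀, hb⟩ := h₂.exists_epi
  exact ResLE.of_epi (b ≫ S.g) h₀ (ResLE.kernel_comp hext b S.g hb (h₁.of_iso hS.isoKernel))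

section EnoughProjectives

variable [EnoughProjectives A]

lemma ResLE.exists_projective (hX : IsResolving X) {n : ℕ}
    (hext : ObjectProperty.IsClosedUnderExtensions (ResLE X · n)) {M : A}
    (h : ResLE X M (n + 1)) :
    ∃ (P : A) (p : P ⟶ M), Projective P ∧ Epi p ∧ ResLE X (kernel p) n := by
  obtain ⟨X₀, c, _, h₀, hc⟩ := h.exists_epi
  have hπ : kernel (Projective.π X₀) ∈ X :=
    hX.kernel_mem _ (hX.projective_mem _ inferInstance) h₀
  exact ⟨_, Projective.π X₀ ≫ c, inferInstance, epi_comp _ _,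
    ResLE.kernel_comp hext _ c ((ResLE.of_mem hπ).mono hX n.zero_le) hc⟩

lemma resLE_X₂_of_shortExact (hX : IsResolving X) {n : ℕ}
    (hext : ObjectProperty.IsClosedUnderExtensions (ResLE X · n)) {S : ShortComplex A}
    (hS : S.ShortExact) (h₁ : ResLE X S.X₁ (n + 1)) (h₃ : ResLE X S.X₃ (n + 1)) :
    ResLE X S.X₂ (n + 1) := by
  have := hS.epi_g
  obtain ⟨X', a, _, h', ha⟩ := h₁.exists_epi
  obtain ⟨P, p, _, _, hp⟩ := h₃.exists_projective hX hext
  let φ : ShortComplex.mk (biprod.inl : X' ⟶ X' ⊞ P) biprod.snd biprod.inl_snd ⟶ S :=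
    { τ₁ := a
      τ₂ := biprod.desc (a ≫ S.f) (Projective.factorThru p S.g)
      τ₃ := p
      comm₂₃ := by ext <;> simp }
  have : Epi φ.τ₂ := epi_τ₂_of_exact_of_epi φ hS.exact
  have hK := shortExact_kernel_of_epi_τ₁ φ (Splitting.ofHasBinaryBiproduct X' P).shortExact hS
  have hK₂ := hext.prop_X₂_of_shortExact hK (ha.of_iso (PreservesKernel.iso π₁ φ).symm)
    (hp.of_iso (PreservesKernel.iso π₃ φ).symm)
  exact ResLE.of_epi φ.τ₂ (hX.biprod_mem h' (hX.projective_mem P ‹_›))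
    (hK₂.of_iso (PreservesKernel.iso π₂ φ))

lemma isClosedUnderExtensions_resLE (hX : IsResolving X) (n : ℕ) :
    ObjectProperty.IsClosedUnderExtensions (ResLE X · n) := by
  induction n with
  | zero =>
    constructor
    intro S hS h₁ h₃
    rw [ResLE.zero_iff hX] at h₁ h₃ ⊢
    exact hX.ext_closed S hS h₁ h₃
  | succ n ih => exact ⟨resLE_X₂_of_shortExact hX ih⟩

lemma ResLE.splice (hX : IsResolving X) {k : ℕ} {M : A} {n : ℕ}
    (h : ResLE {Y | ResLE X Y k} M n) : ResLE X M (n + k) := by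
  induction h with
  | zero e h₀ => simpa using h₀.of_iso e
  | @succ M K X₀ m f g w hse h₀ _ ih =>
    rw [Nat.add_right_comm]
    exact resLE_X₃_of_shortExact (isClosedUnderExtensions_resLE hX _) hse ih
      (h₀.mono hX (by omega))

end EnoughProjectives

lemma ResLE.map {D : Type*} [Category D] [Abelian D] (F : A ⥤ D) [PreservesFiniteLimits F]
    [PreservesFiniteColimits F] {Z : Set D} (hF : ∀ Y ∈ X, F.obj Y ∈ Z) {M : A} {n : ℕ}
    (h : ResLE X M n) : ResLE Z (F.obj M) n := by
  induction h with
  | zero e h₀ => exact zero (F.mapIso e) (hF _ h₀)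
  | succ f g w hse h₀ _ ih =>
    exact succ (F.map f) (F.map g) (by rw [← F.map_comp, w, F.map_zero])
      (hse.map_of_exact F) (hF _ h₀) ih

lemma ENat.le_add_of_forall_coe {a b c : ℕ∞}
    (h : ∀ m n : ℕ, a ≤ m → b ≤ n → c ≤ m + n) : c ≤ a + b := by
  induction a using ENat.recTopCoe with
  | top => simp
  | coe m =>
    induction b using ENat.recTopCoe with
    | top => simp
    | coe n => exact h m n le_rfl le_rfl

namespace Recollement

variable {B : Type u₂} {C : Type u₃} [Category.{v₂} B] [Category.{v₃} C]
  [Abelian B] [Abelian C] [EnoughProjectives C] (R : Recollement A B C) {X_B : Set B} {X_C : Set C}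

lemma resLE_of_resLE_jLower (hC : IsResolving X_C) {M : C} {n k : ℕ}
    (hM : ResLE X_B (R.jLower.obj M) n) (hk : ∀ P ∈ X_B, ResLE X_C (R.jStar.obj P) k) :
    ResLE X_C M (n + k) :=
  have := R.jStar_preservesFiniteLimits
  have := R.jStar_preservesFiniteColimits
  have := R.jLower_full
  have := R.jLower_faithful
  ((hM.map R.jStar hk).splice hC).of_iso (asIso (R.adj₃.unit.app M)).symm

lemma resDimCat_le_add (X_B : Set B) (hC : IsResolving X_C) :
    resDimCat X_C ≤ resDimCat X_B + ⨆ (P : B) (_ : P ∈ X_B), resDim X_C (R.jStar.obj P) := by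
  refine ENat.le_add_of_forall_coe fun n k hn hk => iSup_le fun M => ?_
  obtain ⟨m, hmn, hm⟩ := resDim_le_coe_iff.mp ((le_iSup _ (R.jLower.obj M)).trans hn)
  have hP : ∀ P ∈ X_B, ResLE X_C (R.jStar.obj P) k := fun P hP =>
    have ⟨l, hlk, hl⟩ := resDim_le_coe_iff.mp
      ((le_iSup₂ (f := fun P _ => resDim X_C (R.jStar.obj P)) P hP).trans hk)
    hl.mono hC hlk
  exact (resDim_le_of_resLE (R.resLE_of_resLE_jLower hC hm hP)).trans
    (by exact_mod_cast Nat.add_le_add_right hmn k)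

end Recollement

theorem resDimCat_C_le_general
    (A : Type u₁) (B : Type u₂) (C : Type u₃)
    [Category.{v₁} A] [Category.{v₂} B] [Category.{v₃} C]
    [Abelian A] [Abelian B] [Abelian C]
    [EnoughProjectives C]
    (R : Recollement A B C)
    (X_B : Set B) (X_C : Set C) (hC : IsResolving X_C) :
    (resDimCat X_C ≤ resDimCat X_B +
      ⨆ (P : B) (_ : P ∈ X_B), resDim X_C (R.jStar.obj P)) ∧
    ((∀ b ∈ X_B, R.jStar.obj b ∈ X_C) → resDimCat X_C ≤ resDimCat X_B) := by
  refine ⟨R.resDimCat_le_add X_B hC, fun hX => (R.resDimCat_le_add X_B hC).trans ?_⟩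
  have hzero : ⨆ (P : B) (_ : P ∈ X_B), resDim X_C (R.jStar.obj P) ≤ 0 :=
    iSup₂_le fun P hP => resDim_le_of_resLE (n := 0) (ResLE.of_mem (hX P hP))
  simpa using add_le_add_right hzero (resDimCat X_B)

/-- `X_C`-res `C` ≤ `X_B`-res `B` + `X_C`-res `j*(X_B)`; in particular, if
`j*(X_B) ⊆ X_C` then `X_C`-res `C` ≤ `X_B`-res `B`. -/
theorem resDimCat_C_le
    (A : Type u₁) (B : Type u₂) (C : Type u₃)
    [Category.{v₁} A] [Category.{v₂} B] [Category.{v₃} C]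
    [Abelian A] [Abelian B] [Abelian C]
    [EnoughProjectives A] [EnoughProjectives B] [EnoughProjectives C]
    (R : Recollement A B C)
    (X_B : Set B) (X_C : Set C) (hB : IsResolving X_B) (hC : IsResolving X_C) :
    (resDimCat X_C ≤ resDimCat X_B +
      ⨆ (P : B) (_ : P ∈ X_B), resDim X_C (R.jStar.obj P)) ∧
    ((∀ b ∈ X_B, R.jStar.obj b ∈ X_C) → resDimCat X_C ≤ resDimCat X_B) :=
  resDimCat_C_le_general A B C R X_B X_C hC
end
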